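/- For every integer n ≥ 2 and every finite field F with q elements, any two connected components of the graph D(n,q) are isomorphic: for any two vertices u, v of D(n,q), the subgraphs induced on the connected component of u and on the connected component of v are isomorphic as graphs. -/

import Mathlib

/-- The `k`-th coordinate (0-based) of a vector in `F^n`, with junk value `0` out of range. -/
def coordOf {n : ℕ} {F : Type*} [Field F] (v : Fin n → F) (k : ℕ) : F :=
  if h : k < n then v ⟨k, h⟩ else 0

/-- Incidence between a point `p` and a line `l` in the graph `D(n,q)`:
for every 1-based index `m` with `2 ≤ m ≤ n`, the corresponding defining equation holds.
For `m ∈ {2,3,4}` these are `l₂ - p₂ = l₁p₁`, `l₃ - p₃ = l₂p₁`, `l₄ - p₄ = l₁p₂`, and for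
`m ≥ 5` the equation is determined by `m mod 4` following the four equations
`l_i - p_i = l₁ p_{i-2}`, `l_{i+1} - p_{i+1} = l_{i-1} p₁`, `l_{i+2} - p_{i+2} = l_i p₁`,
`l_{i+3} - p_{i+3} = l₁ p_{i+1}` for `i ≡ 1 (mod 4)`, `i ≥ 5`. -/
def DInc (n : ℕ) (F : Type*) [Field F] (p l : Fin n → F) : Prop :=
  ∀ m : ℕ, 2 ≤ m → m ≤ n →
    coordOf l (m - 1) - coordOf p (m - 1) =
      if m = 2 then coordOf l 0 * coordOf p 0
      else if m = 3 then coordOf l 1 * coordOf p 0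
      else if m = 4 then coordOf l 0 * coordOf p 1
      else if m % 4 = 1 ∨ m % 4 = 0 then coordOf l 0 * coordOf p (m - 3)
      else coordOf l (m - 3) * coordOf p 0

/-- The bipartite graph `D(n,q)`: vertices are a disjoint union of points (`Sum.inl`)
and lines (`Sum.inr`), both copies of `F^n`, adjacent iff incident. -/
def DGraph (n : ℕ) (F : Type*) [Field F] :
    SimpleGraph ((Fin n → F) ⊕ (Fin n → F)) where
  Adj x y :=
    match x, y with
    | Sum.inl p, Sum.inr l => DInc n F p l
    | Sum.inr l, Sum.inl p => DInc n F p l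
    | _, _ => False
  symm := by constructor; rintro (p | l) (p' | l') h <;> first | exact h | exact h.elim
  loopless := by constructor; rintro (p | l) h <;> exact h

/-!
For `s ≥ 2` and `a ∈ F`, adding `a` to coordinate `s` of all points and lines and then correcting
the later coordinates along the chain `s + 2, s + 4, …` gives an automorphism `t_s(a)` of `D(n,q)`:
it changes the defect of each incidence equation only by a multiple of the defect of an earlier
equation. The maps `t_s(a)` are triangular with unit diagonal, hence bijective, and composing them
moves any point to any other point with the same first two coordinates. Since every vertex is
joined by a path to a point with prescribed first two coordinates, any two components contain
points `p`, `q` and an automorphism maps `p` to `q`; it restricts to an isomorphism of the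
components.
-/

open SimpleGraph

def SimpleGraph.Iso.induceConnectedComponent {V W : Type*} {G : SimpleGraph V}
    {G' : SimpleGraph W} (φ : G ≃g G') (u : V) :
    G.induce (G.connectedComponentMk u).supp ≃g G'.induce (G'.connectedComponentMk (φ u)).supp :=
  φ.induce <| φ.toEquiv.bijOn fun w => by simp [ConnectedComponent.eq, Iso.reachable_iff]

theorem bijective_add_of_triangular {G : Type*} [AddGroup G] {n : ℕ}
    (c : (Fin n → G) → Fin n → G) (hc : ∀ x y i, (∀ j < i, x j = y j) → c x i = c y i) :
    Function.Bijective fun x => x + c x := by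
  refine ⟨fun x y hxy => funext fun i => ?_, fun y => ?_⟩
  · induction i using WellFoundedLT.induction with
    | _ i ih =>
      have hi : x i + c x i = y i + c y i := congrFun hxy i
      rw [hc x y i ih] at hi
      exact add_right_cancel hi
  -- The `i`-th coordinate of the iterates of `x ↦ y - c x` is constant from step `i + 1` on.
  · set f : (Fin n → G) → Fin n → G := fun x => y - c x
    have hstab (k : ℕ) (i : Fin n) (hi : i.val < k) : f^[k + 1] y i = f^[k] y i := by
      induction k generalizing i with
      | zero => omega
      | succ k ih =>
        calc f^[k + 2] y i = y i - c (f^[k + 1] y) i := by rw [Function.iterate_succ_apply']; rfl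
          _ = y i - c (f^[k] y) i := by rw [hc _ _ i fun j hj => ih j (by omega)]
          _ = f^[k + 1] y i := by rw [Function.iterate_succ_apply']; rfl
    refine ⟨f^[n] y, funext fun i => ?_⟩
    have hfix := hstab n i i.isLt
    rw [Function.iterate_succ_apply'] at hfix
    exact eq_sub_iff_add_eq.mp hfix.symm

namespace DGraph

variable {F : Type*} [Field F]

/-- Coordinates are indexed from `0` here: for `k ≥ 1`, the equation
`L k - P k = incRhs P L k` is the defining equation of index `k + 1` in `D(n,q)`. -/
def incRhs (P L : ℕ → F) (k : ℕ) : F :=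
  if k = 1 then L 0 * P 0
  else if k = 2 then L 1 * P 0
  else if k % 4 = 3 ∨ k % 4 = 0 then L 0 * P (k - 2)
  else L (k - 2) * P 0

def incDefect (P L : ℕ → F) (k : ℕ) : F := L k - P k - incRhs P L k

def Incident (N : ℕ) (P L : ℕ → F) : Prop := ∀ k, 1 ≤ k → k < N → incDefect P L k = 0

section incRhs

variable (P L : ℕ → F) {k : ℕ}

theorem incRhs_one (hk : k = 1) : incRhs P L k = L 0 * P 0 := by
  simp [incRhs, hk]

theorem incRhs_two (hk : k = 2) : incRhs P L k = L 1 * P 0 := by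
  simp [incRhs, hk]

theorem incRhs_of_mod_four (hk : 3 ≤ k) (hk4 : k % 4 = 3 ∨ k % 4 = 0) :
    incRhs P L k = L 0 * P (k - 2) := by
  rw [incRhs, if_neg (by omega), if_neg (by omega), if_pos hk4]

theorem incRhs_of_not_mod_four (hk : 3 ≤ k) (hk4 : ¬(k % 4 = 3 ∨ k % 4 = 0)) :
    incRhs P L k = L (k - 2) * P 0 := by
  rw [incRhs, if_neg (by omega), if_neg (by omega), if_neg hk4]

end incRhs

section congr

variable {P L P' L' : ℕ → F} {k : ℕ}

theorem incRhs_congr (hP0 : P' 0 = P 0) (hPk : P' (k - 2) = P (k - 2)) (hL0 : L' 0 = L 0)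
    (hL1 : L' 1 = L 1) (hLk : L' (k - 2) = L (k - 2)) :
    incRhs P' L' k = incRhs P L k := by
  simp only [incRhs, hP0, hPk, hL0, hL1, hLk]

theorem incRhs_congr_of_lt (hk : 1 ≤ k) (hP : ∀ j < k, P' j = P j) (hL : ∀ j < k, L' j = L j) :
    incRhs P' L' k = incRhs P L k := by
  by_cases hk1 : k = 1
  · simp only [incRhs_one _ _ hk1, hP 0 (by omega), hL 0 (by omega)]
  · exact incRhs_congr (hP 0 (by omega)) (hP _ (by omega)) (hL 0 (by omega)) (hL 1 (by omega))
      (hL _ (by omega))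

theorem incident_congr {N : ℕ} (hP : ∀ j < N, P' j = P j) (hL : ∀ j < N, L' j = L j) :
    Incident N P' L' ↔ Incident N P L := by
  refine forall₂_congr fun k hk => forall_congr' fun hkN => ?_
  rw [incDefect, incDefect, hP k hkN, hL k hkN,
    incRhs_congr_of_lt hk (fun j hj => hP j (by omega)) (fun j hj => hL j (by omega))]

end congr

theorem incident_succ_iff {N : ℕ} {P L : ℕ → F} :
    Incident (N + 1) P L ↔ Incident N P L ∧ (1 ≤ N → incDefect P L N = 0) := by
  refine ⟨fun h => ⟨fun k hk hkN => h k hk (by omega), fun hN => h N hN (by omega)⟩,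
    fun ⟨h, hN⟩ k hk hkN => ?_⟩
  rcases (show k < N ∨ k = N by omega) with hkN | rfl
  · exact h k hk hkN
  · exact hN hk

/-- The corrections that `t_s(a)` adds to the coordinates of a point (`ptCorr`) and of a line
(`lnCorr`). Adding `a` to both `P s` and `L s` keeps equation `s`; the only other equation
involving coordinate `s` is equation `s + 2`, through `L 0 * P s` or through `L s * P 0`
according to `(s + 2) % 4`, and the two cases need different repairs. -/
def ptCorr (s : ℕ) (a : F) (X : ℕ → F) (j : ℕ) : F :=
  if j = s then a
  else if j = s + 2 then (if (s + 2) % 4 = 3 ∨ (s + 2) % 4 = 0 then 0 else -(a * X 0))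
  else if s + 4 ≤ j ∧ (j - s) % 2 = 0 then
    (if (s + 2) % 4 = 3 ∨ (s + 2) % 4 = 0 then a * X (j - s - 3)
     else if j = s + 4 then -(a * X 1)
     else -(a * X (j - s - 4)))
  else 0

def lnCorr (s : ℕ) (a : F) (X : ℕ → F) (j : ℕ) : F :=
  if j = s then a
  else if j = s + 2 then (if (s + 2) % 4 = 3 ∨ (s + 2) % 4 = 0 then a * X 0 else 0)
  else ptCorr s a X j

section corr

variable {s j : ℕ} (a : F) (X : ℕ → F)

theorem ptCorr_of_not_chain (hj : ¬(s ≤ j ∧ (j - s) % 2 = 0)) : ptCorr s a X j = 0 := by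
  rw [ptCorr, if_neg (by omega), if_neg (by omega), if_neg (by omega)]

theorem lnCorr_of_not_chain (hj : ¬(s ≤ j ∧ (j - s) % 2 = 0)) : lnCorr s a X j = 0 := by
  rw [lnCorr, if_neg (by omega), if_neg (by omega), ptCorr_of_not_chain a X hj]

theorem ptCorr_self (hj : j = s) : ptCorr s a X j = a := by rw [ptCorr, if_pos hj]

theorem lnCorr_self (hj : j = s) : lnCorr s a X j = a := by rw [lnCorr, if_pos hj]

theorem lnCorr_of_add_three_le (hj : s + 3 ≤ j) : lnCorr s a X j = ptCorr s a X j := by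
  rw [lnCorr, if_neg (by omega), if_neg (by omega)]

section mod_four

variable (hs : (s + 2) % 4 = 3 ∨ (s + 2) % 4 = 0)
include hs

theorem ptCorr_add_two_of_mod_four (hj : j = s + 2) : ptCorr s a X j = 0 := by
  rw [ptCorr, if_neg (by omega), if_pos hj, if_pos hs]

theorem lnCorr_add_two_of_mod_four (hj : j = s + 2) : lnCorr s a X j = a * X 0 := by
  rw [lnCorr, if_neg (by omega), if_pos hj, if_pos hs]

theorem ptCorr_of_mod_four (hj : s + 4 ≤ j) (hj2 : (j - s) % 2 = 0) :
    ptCorr s a X j = a * X (j - s - 3) := by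
  rw [ptCorr, if_neg (by omega), if_neg (by omega), if_pos ⟨hj, hj2⟩, if_pos hs]

end mod_four

section not_mod_four

variable (hs : ¬((s + 2) % 4 = 3 ∨ (s + 2) % 4 = 0))
include hs

theorem ptCorr_add_two_of_not_mod_four (hj : j = s + 2) : ptCorr s a X j = -(a * X 0) := by
  rw [ptCorr, if_neg (by omega), if_pos hj, if_neg hs]

theorem lnCorr_add_two_of_not_mod_four (hj : j = s + 2) : lnCorr s a X j = 0 := by
  rw [lnCorr, if_neg (by omega), if_pos hj, if_neg hs]

theorem ptCorr_add_four_of_not_mod_four (hj : j = s + 4) : ptCorr s a X j = -(a * X 1) := by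
  rw [ptCorr, if_neg (by omega), if_neg (by omega), if_pos (by omega), if_neg hs, if_pos hj]

theorem ptCorr_of_not_mod_four (hj : s + 6 ≤ j) (hj2 : (j - s) % 2 = 0) :
    ptCorr s a X j = -(a * X (j - s - 4)) := by
  rw [ptCorr, if_neg (by omega), if_neg (by omega), if_pos (by omega), if_neg hs,
    if_neg (by omega)]

end not_mod_four

variable {a X} {Y : ℕ → F} (hs : 2 ≤ s) (h : ∀ i < j, X i = Y i)
include hs h

theorem ptCorr_congr : ptCorr s a X j = ptCorr s a Y j := by
  unfold ptCorr
  split_ifs <;> first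
    | rfl
    | rw [h 0 (by omega)]
    | rw [h 1 (by omega)]
    | rw [h (j - s - 3) (by omega)]
    | rw [h (j - s - 4) (by omega)]

theorem lnCorr_congr : lnCorr s a X j = lnCorr s a Y j := by
  unfold lnCorr
  split_ifs
  · rfl
  · rw [h 0 (by omega)]
  · rfl
  · exact ptCorr_congr hs h

end corr

section shift

variable {s k : ℕ} (a : F) {P L : ℕ → F}

theorem incDefect_shift_of_not_chain (hs : 2 ≤ s) (hchain : ¬(s < k ∧ (k - s) % 2 = 0)) :
    incDefect (P + ptCorr s a P) (L + lnCorr s a L) k = incDefect P L k := by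
  have hP (j) (hj : j = 0 ∨ j = 1 ∨ j = k - 2) : (P + ptCorr s a P) j = P j := by
    rw [Pi.add_apply, ptCorr_of_not_chain a P (by omega), add_zero]
  have hL (j) (hj : j = 0 ∨ j = 1 ∨ j = k - 2) : (L + lnCorr s a L) j = L j := by
    rw [Pi.add_apply, lnCorr_of_not_chain a L (by omega), add_zero]
  have hcorr : lnCorr s a L k = ptCorr s a P k := by
    by_cases hks : k = s
    · rw [ptCorr_self a P hks, lnCorr_self a L hks]
    · rw [ptCorr_of_not_chain a P (by omega), lnCorr_of_not_chain a L (by omega)]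
  rw [incDefect, incDefect, incRhs_congr (hP 0 (by omega)) (hP _ (by omega)) (hL 0 (by omega))
    (hL 1 (by omega)) (hL _ (by omega)), Pi.add_apply, Pi.add_apply, hcorr]
  ring

theorem incDefect_shift_of_mod_four (hs : 2 ≤ s) (hs4 : (s + 2) % 4 = 3 ∨ (s + 2) % 4 = 0)
    (hchain : s < k ∧ (k - s) % 2 = 0) (h : Incident k P L) :
    incDefect (P + ptCorr s a P) (L + lnCorr s a L) k = incDefect P L k := by
  rcases (show k = s + 2 ∨ s + 4 ≤ k by omega) with rfl | hk
  · simp (disch := omega) only [incDefect, Pi.add_apply, incRhs_of_mod_four, ptCorr_self,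
      ptCorr_add_two_of_mod_four, lnCorr_add_two_of_mod_four, lnCorr_of_not_chain]
    ring
  have hr := h (k - s - 3) (by omega) (by omega)
  rcases (show k = s + 4 ∨ (k - s) % 4 = 2 ∨ (s + 8 ≤ k ∧ (k - s) % 4 = 0) by omega) with
    rfl | hk4 | ⟨hk, hk4⟩ <;>
  simp (disch := omega) only [incDefect, Pi.add_apply, incRhs_one, incRhs_of_mod_four,
    incRhs_of_not_mod_four, ptCorr_of_not_chain, lnCorr_of_not_chain, lnCorr_add_two_of_mod_four,
    ptCorr_of_mod_four, lnCorr_of_add_three_le, Nat.sub_sub, Nat.add_sub_add_left] at hr ⊢ <;>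
  ring_nf at hr ⊢ <;>
  linear_combination a * hr

theorem incDefect_shift_of_not_mod_four (hs : 2 ≤ s) (hs4 : ¬((s + 2) % 4 = 3 ∨ (s + 2) % 4 = 0))
    (hchain : s < k ∧ (k - s) % 2 = 0) (h : Incident k P L) :
    incDefect (P + ptCorr s a P) (L + lnCorr s a L) k = incDefect P L k := by
  rcases (show k = s + 2 ∨ k = s + 4 ∨ s + 6 ≤ k by omega) with rfl | rfl | hk
  · simp (disch := omega) only [incDefect, Pi.add_apply, incRhs_of_not_mod_four, lnCorr_self,
      ptCorr_add_two_of_not_mod_four, lnCorr_add_two_of_not_mod_four, ptCorr_of_not_chain]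
    ring
  · have hr := h 1 le_rfl (by omega)
    simp (disch := omega) only [incDefect, Pi.add_apply, incRhs_one, incRhs_of_mod_four,
      lnCorr_of_not_chain, ptCorr_add_two_of_not_mod_four, ptCorr_add_four_of_not_mod_four,
      lnCorr_of_add_three_le] at hr ⊢
    linear_combination -a * hr
  have hr := h (k - s - 4) (by omega) (by omega)
  rcases (show k = s + 6 ∨ (s + 8 ≤ k ∧ (k - s) % 4 = 0) ∨ (s + 10 ≤ k ∧ (k - s) % 4 = 2) by
    omega) with rfl | ⟨hk, hk4⟩ | ⟨hk, hk4⟩ <;>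
  simp (disch := omega) only [incDefect, Pi.add_apply, incRhs_two, incRhs_of_mod_four,
    incRhs_of_not_mod_four, ptCorr_of_not_chain, lnCorr_of_not_chain,
    ptCorr_add_four_of_not_mod_four, ptCorr_of_not_mod_four, lnCorr_of_add_three_le, Nat.sub_sub,
    Nat.add_sub_add_left] at hr ⊢ <;>
  ring_nf at hr ⊢ <;>
  linear_combination -a * hr

theorem incDefect_shift (hs : 2 ≤ s) (h : Incident k P L) :
    incDefect (P + ptCorr s a P) (L + lnCorr s a L) k = incDefect P L k := by
  by_cases hchain : s < k ∧ (k - s) % 2 = 0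
  · by_cases hs4 : (s + 2) % 4 = 3 ∨ (s + 2) % 4 = 0
    · exact incDefect_shift_of_mod_four a hs hs4 hchain h
    · exact incDefect_shift_of_not_mod_four a hs hs4 hchain h
  · exact incDefect_shift_of_not_chain a hs hchain

theorem incident_shift_iff {N : ℕ} (hs : 2 ≤ s) :
    Incident N (P + ptCorr s a P) (L + lnCorr s a L) ↔ Incident N P L := by
  induction N with
  | zero => simp [Incident]
  | succ N ih =>
    rw [incident_succ_iff, incident_succ_iff, ih]
    exact and_congr_right fun h => imp_congr_right fun _ => by rw [incDefect_shift a hs h]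

end shift

variable {n : ℕ}

theorem adj_inl_inr {p l : Fin n → F} : (DGraph n F).Adj (.inl p) (.inr l) ↔ DInc n F p l :=
  Iff.rfl

theorem adj_inr_inl {p l : Fin n → F} : (DGraph n F).Adj (.inr l) (.inl p) ↔ DInc n F p l :=
  Iff.rfl

theorem coordOf_of_lt (x : Fin n → F) {j : ℕ} (hj : j < n) : coordOf x j = x ⟨j, hj⟩ :=
  dif_pos hj

theorem coordOf_congr {x y : Fin n → F} {i : ℕ} (h : ∀ j : Fin n, j.val < i → x j = y j) :
    ∀ j < i, coordOf x j = coordOf y j := by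
  intro j hj
  by_cases hjn : j < n
  · rw [coordOf_of_lt x hjn, coordOf_of_lt y hjn, h _ hj]
  · simp only [coordOf, dif_neg hjn]

theorem eq_of_coordOf_eq {x y : Fin n → F} (h : ∀ j < n, coordOf x j = coordOf y j) : x = y :=
  funext fun i => by simpa only [coordOf_of_lt _ i.isLt] using h i i.isLt

theorem dInc_rhs_eq_incRhs (P L : ℕ → F) {k : ℕ} (hk : 1 ≤ k) :
    (if k + 1 = 2 then L 0 * P 0
      else if k + 1 = 3 then L 1 * P 0
      else if k + 1 = 4 then L 0 * P 1
      else if (k + 1) % 4 = 1 ∨ (k + 1) % 4 = 0 then L 0 * P (k + 1 - 3)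
      else L (k + 1 - 3) * P 0) = incRhs P L k := by
  rcases (show k = 1 ∨ k = 2 ∨ k = 3 ∨ 4 ≤ k by omega) with rfl | rfl | rfl | hk4
  · rfl
  · rfl
  · rfl
  · rw [if_neg (by omega), if_neg (by omega), if_neg (by omega), show k + 1 - 3 = k - 2 by omega]
    by_cases hk' : k % 4 = 3 ∨ k % 4 = 0
    · rw [if_pos (by omega), incRhs_of_mod_four P L (by omega) hk']
    · rw [if_neg (by omega), incRhs_of_not_mod_four P L (by omega) hk']

theorem dInc_iff {p l : Fin n → F} : DInc n F p l ↔ Incident n (coordOf p) (coordOf l) := by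
  constructor
  · intro h k hk hkn
    have hk' := h (k + 1) (by omega) hkn
    rw [Nat.add_sub_cancel, dInc_rhs_eq_incRhs _ _ hk] at hk'
    rw [incDefect, hk', sub_self]
  · intro h m hm hmn
    obtain ⟨k, rfl⟩ : ∃ k, m = k + 1 := ⟨m - 1, by omega⟩
    rw [Nat.add_sub_cancel, dInc_rhs_eq_incRhs _ _ (by omega)]
    exact sub_eq_zero.mp (h k (by omega) hmn)

theorem coordOf_one_sub_of_dInc (hn : 2 ≤ n) {p l : Fin n → F} (h : DInc n F p l) :
    coordOf l 1 - coordOf p 1 = coordOf l 0 * coordOf p 0 := by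
  simpa using h 2 le_rfl hn

theorem exists_dInc_line (hn : 0 < n) (p : Fin n → F) (t : F) :
    ∃ l, DInc n F p l ∧ coordOf l 0 = t := by
  obtain ⟨l, hl⟩ := (bijective_add_of_triangular
    (fun x i => if i.val = 0 then 0 else -incRhs (coordOf p) (coordOf x) i) fun x y i h => by
      split_ifs with hi
      · rfl
      · rw [incRhs_congr_of_lt (by omega) (fun _ _ => rfl)
          (coordOf_congr fun j hj => (h j hj).symm)]
    ).2 fun i => if i.val = 0 then t else p i
  refine ⟨l, dInc_iff.2 fun k hk hkn => ?_, ?_⟩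
  · have hlk := congrFun hl ⟨k, hkn⟩
    simp only [Pi.add_apply, if_neg (show k ≠ 0 by omega)] at hlk
    rw [incDefect, coordOf_of_lt l hkn, coordOf_of_lt p hkn, ← hlk]
    ring
  · simpa [coordOf_of_lt l hn] using congrFun hl ⟨0, hn⟩

theorem exists_dInc_point (hn : 0 < n) (l : Fin n → F) (t : F) :
    ∃ p, DInc n F p l ∧ coordOf p 0 = t := by
  obtain ⟨p, hp⟩ := (bijective_add_of_triangular
    (fun x i => if i.val = 0 then 0 else incRhs (coordOf x) (coordOf l) i) fun x y i h => by
      split_ifs with hi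
      · rfl
      · rw [incRhs_congr_of_lt (by omega) (coordOf_congr fun j hj => (h j hj).symm) fun _ _ => rfl]
    ).2 fun i => if i.val = 0 then t else l i
  refine ⟨p, dInc_iff.2 fun k hk hkn => ?_, ?_⟩
  · have hpk := congrFun hp ⟨k, hkn⟩
    simp only [Pi.add_apply, if_neg (show k ≠ 0 by omega)] at hpk
    rw [incDefect, coordOf_of_lt l hkn, coordOf_of_lt p hkn, ← hpk]
    ring
  · simpa [coordOf_of_lt p hn] using congrFun hp ⟨0, hn⟩

theorem exists_reachable_inl_of_inl (hn : 2 ≤ n) (p : Fin n → F) (t b : F) :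
    ∃ q, (DGraph n F).Reachable (.inl p) (.inl q) ∧ coordOf q 0 = t ∧ coordOf q 1 = b := by
  obtain ⟨l₁, hpl₁, hl₁⟩ := exists_dInc_line (by omega) p 0
  obtain ⟨p₂, hp₂l₁, hp₂⟩ := exists_dInc_point (by omega) l₁ (t + 1)
  obtain ⟨l₂, hp₂l₂, hl₂⟩ := exists_dInc_line (by omega) p₂ (b - coordOf p 1)
  obtain ⟨q, hql₂, hq⟩ := exists_dInc_point (by omega) l₂ t
  refine ⟨q, ?_, hq, ?_⟩
  · exact (adj_inl_inr.2 hpl₁).reachable.trans <| (adj_inr_inl.2 hp₂l₁).reachable.trans <|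
      (adj_inl_inr.2 hp₂l₂).reachable.trans (adj_inr_inl.2 hql₂).reachable
  -- The first coordinates `0, t + 1, b - p₁, t` along the walk make the second coordinates
  -- `p₁, p₁, p₁ + (b - p₁) (t + 1), b`.
  · have e₁ := coordOf_one_sub_of_dInc hn hpl₁
    have e₂ := coordOf_one_sub_of_dInc hn hp₂l₁
    have e₃ := coordOf_one_sub_of_dInc hn hp₂l₂
    have e₄ := coordOf_one_sub_of_dInc hn hql₂
    rw [hl₁] at e₁ e₂
    rw [hp₂, hl₂] at e₃
    rw [hq, hl₂] at e₄
    linear_combination e₁ - e₂ + e₃ - e₄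

theorem exists_reachable_inl (hn : 2 ≤ n) (w : (Fin n → F) ⊕ (Fin n → F)) (t b : F) :
    ∃ q, (DGraph n F).Reachable w (.inl q) ∧ coordOf q 0 = t ∧ coordOf q 1 = b := by
  rcases w with p | l
  · exact exists_reachable_inl_of_inl hn p t b
  · obtain ⟨p, hpl, -⟩ := exists_dInc_point (by omega) l 0
    obtain ⟨q, hpq, hq⟩ := exists_reachable_inl_of_inl hn p t b
    exact ⟨q, (adj_inr_inl.2 hpl).reachable.trans hpq, hq⟩

def shiftPoint (s : ℕ) (a : F) (p : Fin n → F) : Fin n → F :=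
  fun i => p i + ptCorr s a (coordOf p) i

def shiftLine (s : ℕ) (a : F) (l : Fin n → F) : Fin n → F :=
  fun i => l i + lnCorr s a (coordOf l) i

section shiftIso

variable {s : ℕ} (a : F)

theorem coordOf_shiftPoint (p : Fin n → F) {j : ℕ} (hj : j < n) :
    coordOf (shiftPoint s a p) j = (coordOf p + ptCorr s a (coordOf p)) j := by
  rw [coordOf_of_lt _ hj, Pi.add_apply, coordOf_of_lt p hj]
  rfl

theorem coordOf_shiftLine (l : Fin n → F) {j : ℕ} (hj : j < n) :
    coordOf (shiftLine s a l) j = (coordOf l + lnCorr s a (coordOf l)) j := by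
  rw [coordOf_of_lt _ hj, Pi.add_apply, coordOf_of_lt l hj]
  rfl

variable (hs : 2 ≤ s)
include hs

theorem dInc_shift_iff {p l : Fin n → F} :
    DInc n F (shiftPoint s a p) (shiftLine s a l) ↔ DInc n F p l := by
  rw [dInc_iff, dInc_iff, incident_congr (fun j hj => coordOf_shiftPoint a p hj)
    (fun j hj => coordOf_shiftLine a l hj), incident_shift_iff a hs]

theorem shiftPoint_bijective : Function.Bijective (shiftPoint (n := n) s a) :=
  bijective_add_of_triangular _ fun _ _ _ h => ptCorr_congr hs (coordOf_congr h)

theorem shiftLine_bijective : Function.Bijective (shiftLine (n := n) s a) :=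
  bijective_add_of_triangular _ fun _ _ _ h => lnCorr_congr hs (coordOf_congr h)

noncomputable def shiftIso : DGraph n F ≃g DGraph n F where
  toEquiv := (Equiv.ofBijective _ (shiftPoint_bijective a hs)).sumCongr
    (Equiv.ofBijective _ (shiftLine_bijective a hs))
  map_rel_iff' := by
    rintro (p | l) (p' | l')
    · exact Iff.rfl
    · exact dInc_shift_iff a hs
    · exact dInc_shift_iff a hs
    · exact Iff.rfl

end shiftIso

theorem exists_iso_inl_eq {k : ℕ} (hk : 2 ≤ k) {p q : Fin n → F}
    (h : ∀ j < k, coordOf p j = coordOf q j) :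
    ∃ φ : DGraph n F ≃g DGraph n F, φ (.inl p) = .inl q := by
  induction hd : n - k generalizing k p with
  | zero => exact ⟨.refl, congrArg Sum.inl (eq_of_coordOf_eq fun j hj => h j (by omega))⟩
  | succ d ih =>
    set a := coordOf q k - coordOf p k
    have hagree : ∀ j < k + 1, coordOf (shiftPoint k a p) j = coordOf q j := by
      intro j hj
      rw [coordOf_shiftPoint a p (by omega), Pi.add_apply]
      rcases (show j < k ∨ j = k by omega) with hjk | rfl
      · rw [ptCorr_of_not_chain a _ (by omega), add_zero, h j hjk]
      · rw [ptCorr_self a _ rfl]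
        ring
    obtain ⟨ψ, hψ⟩ := ih (by omega) hagree (by omega)
    exact ⟨(shiftIso a hk).trans ψ, hψ⟩

end DGraph

theorem DGraph_components_isomorphic_general (n : ℕ) (hn : 2 ≤ n) (F : Type*) [Field F]
    (u v : (Fin n → F) ⊕ (Fin n → F)) :
    Nonempty
      ((SimpleGraph.induce ((DGraph n F).connectedComponentMk u).supp (DGraph n F)) ≃g
       (SimpleGraph.induce ((DGraph n F).connectedComponentMk v).supp (DGraph n F))) := by
  obtain ⟨p, hup, hp₀, hp₁⟩ := DGraph.exists_reachable_inl hn u 0 0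
  obtain ⟨q, hvq, hq₀, hq₁⟩ := DGraph.exists_reachable_inl hn v 0 0
  have hpq : ∀ j < 2, coordOf p j = coordOf q j := by
    intro j hj
    interval_cases j <;> simp only [hp₀, hq₀, hp₁, hq₁]
  obtain ⟨φ, hφ⟩ := DGraph.exists_iso_inl_eq le_rfl hpq
  rw [ConnectedComponent.sound hup, ConnectedComponent.sound hvq, ← hφ]
  exact ⟨φ.induceConnectedComponent _⟩

/-- Any two connected components of `D(n,q)` are isomorphic: for vertices `u, v`, the induced
subgraphs on the connected components of `u` and of `v` are isomorphic. -/
theorem DGraph_components_isomorphic (n : ℕ) (hn : 2 ≤ n) (F : Type*) [Field F] [Fintype F]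
    (u v : (Fin n → F) ⊕ (Fin n → F)) :
    Nonempty
      ((SimpleGraph.induce ((DGraph n F).connectedComponentMk u).supp (DGraph n F)) ≃g
       (SimpleGraph.induce ((DGraph n F).connectedComponentMk v).supp (DGraph n F))) :=
  DGraph_components_isomorphic_general n hn F u v
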